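/- arXiv:0811.3801 — 2 statements merged into one kernel-verified Lean document; each statement's English description precedes it below -/
import Mathlib

section
/- In ℚ[z_α] modulo the multiplication relations z_α z_β = z_{α·β} + z_{α⊙β}, the set of relations T: z_x = z_{1^x} for all x ≥ 1 is equivalent to the smaller set of relations ET: z_{2x} = z_{1^{2x}} for all x ≥ 1. In particular, the odd cases z_{2x+1} = z_{1^{2x+1}} follow from the even cases together with the multiplication relations. -/
/-- A composition: a nonempty list of positive integers. -/
def IsComposition (α : List ℕ) : Prop := α ≠ [] ∧ ∀ a ∈ α, 0 < a

/-- `α ⊙ β`: add the last part of `α` to the first part of `β`. -/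
def compNcat (α β : List ℕ) : List ℕ :=
  match α.reverse with
  | [] => β
  | a :: as =>
    match β with
    | [] => α
    | b :: bs => as.reverse ++ (a + b) :: bs

open MvPolynomial

/-- The indeterminate `z_α` in `ℚ[z_α]`. -/
noncomputable def z (α : List ℕ) : MvPolynomial (List ℕ) ℚ := MvPolynomial.X α

/-- The multiplication relations `z_α z_β = z_{α·β} + z_{α⊙β}`. -/
def MultRels : Set (MvPolynomial (List ℕ) ℚ) :=
  {p | ∃ α β : List ℕ, IsComposition α ∧ IsComposition β ∧
    p = z α * z β - z (α ++ β) - z (compNcat α β)}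

/-- The relations `EE`: `z_{2x} = z_{(2x-1)1} - z_{(2x-2)2} + ⋯ + z_{1(2x-1)}`. -/
def EERels : Set (MvPolynomial (List ℕ) ℚ) :=
  {p | ∃ x : ℕ, 1 ≤ x ∧
    p = z [2*x] - ∑ i ∈ Finset.Icc 1 (2*x - 1), (-1) ^ (i + 1) * z [2*x - i, i]}

/-- The relations `EI`: `2 z_{2x} = z_{2x-1} z₁ - z_{2x-2} z₂ + ⋯ + z₁ z_{2x-1}`. -/
def EIRels : Set (MvPolynomial (List ℕ) ℚ) :=
  {p | ∃ x : ℕ, 1 ≤ x ∧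
    p = 2 * z [2*x] - ∑ i ∈ Finset.Icc 1 (2*x - 1), (-1) ^ (i + 1) * z [2*x - i] * z [i]}

/-- The relations `T`: `z_x = z_{1^x}` for all `x ≥ 1`. -/
def TRels : Set (MvPolynomial (List ℕ) ℚ) :=
  {p | ∃ x : ℕ, 1 ≤ x ∧ p = z [x] - z (List.replicate x 1)}

/-- The relations `ET`: `z_{2x} = z_{1^{2x}}` for all `x ≥ 1`. -/
def ETRels : Set (MvPolynomial (List ℕ) ℚ) :=
  {p | ∃ x : ℕ, 1 ≤ x ∧ p = z [2*x] - z (List.replicate (2*x) 1)}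

lemma compNcat_replicate (i k : ℕ) :
    compNcat (List.replicate (i+1) 1) [k] = List.replicate i 1 ++ [1 + k] := by
  unfold compNcat
  rw [List.reverse_replicate]
  simp [List.replicate_succ]

lemma isComp_replicate (i : ℕ) (h : 1 ≤ i) : IsComposition (List.replicate i 1) := by
  constructor
  · simp; omega
  · intro a ha; simp at ha; omega

lemma isComp_single (k : ℕ) (h : 1 ≤ k) : IsComposition [k] := by
  constructor
  · simp
  · intro a ha; simp at ha; omega

lemma mult_mem (α β : List ℕ) (hα : IsComposition α) (hβ : IsComposition β) :
    z α * z β - z (α ++ β) - z (compNcat α β) ∈ Ideal.span MultRels :=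
  Ideal.subset_span ⟨α, β, hα, hβ, rfl⟩

lemma newton (n : ℕ) (hn : 1 ≤ n) :
    z [n] + (-1)^n * z (List.replicate n 1) +
      ∑ i ∈ Finset.range (n-1), (-1)^(i+1) * (z (List.replicate (i+1) 1) * z [n-1-i])
    ∈ Ideal.span MultRels := by
  set R : ℕ → MvPolynomial (List ℕ) ℚ := fun j => z (List.replicate j 1 ++ [n - j]) with hR
  have tele : ∑ i ∈ Finset.range (n-1),
      ((-1:MvPolynomial (List ℕ) ℚ)^(i+1) * R (i+1) - (-1)^i * R i)
      = (-1)^(n-1) * R (n-1) - (-1)^0 * R 0 :=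
    Finset.sum_range_sub (f := fun i => (-1)^i * R i) (n-1)
  have hRn : R (n-1) = z (List.replicate n 1) := by
    have h1 : n - (n-1) = 1 := by omega
    have h2 : List.replicate (n-1) 1 ++ [1] = List.replicate n 1 := by
      rw [← List.replicate_succ']
      congr 1; omega
    simp only [hR, h1, h2]
  have hR0 : R 0 = z [n] := by simp [hR]
  have hpow : (-1: MvPolynomial (List ℕ) ℚ)^n = -(-1: MvPolynomial (List ℕ) ℚ)^(n-1) := by
    nth_rewrite 1 [show n = (n-1)+1 by omega]
    rw [pow_succ]; ring
  have key : z [n] + (-1)^n * z (List.replicate n 1) +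
      ∑ i ∈ Finset.range (n-1), (-1)^(i+1) * (z (List.replicate (i+1) 1) * z [n-1-i])
      = ∑ i ∈ Finset.range (n-1), (-1)^(i+1) *
        (z (List.replicate (i+1) 1) * z [n-1-i] - R (i+1) - R i) := by
    have e1 : ∀ i ∈ Finset.range (n-1),
        (-1: MvPolynomial (List ℕ) ℚ)^(i+1) *
          (z (List.replicate (i+1) 1) * z [n-1-i] - R (i+1) - R i)
        = (-1)^(i+1) * (z (List.replicate (i+1) 1) * z [n-1-i])
          - ((-1)^(i+1) * R (i+1) - (-1)^i * R i) := by
      intro i _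
      have : (-1: MvPolynomial (List ℕ) ℚ)^(i+1) = -(-1: MvPolynomial (List ℕ) ℚ)^i := by
        rw [pow_succ]; ring
      rw [this]; ring
    rw [Finset.sum_congr rfl e1, Finset.sum_sub_distrib, tele, hRn, hR0, hpow]
    ring
  rw [key]
  apply Ideal.sum_mem
  intro i hi
  simp only [Finset.mem_range] at hi
  apply Ideal.mul_mem_left
  have hb : n - 1 - i = n - (i+1) := by omega
  have hc : 1 + (n-1-i) = n - i := by omega
  have hm := mult_mem (List.replicate (i+1) 1) [n-1-i]
    (isComp_replicate _ (by omega)) (isComp_single _ (by omega))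
  rw [compNcat_replicate, hc] at hm
  simp only [hR, ← hb]
  exact hm

lemma TinI : ∀ n : ℕ, 1 ≤ n →
    z [n] - z (List.replicate n 1) ∈ Ideal.span (MultRels ∪ ETRels) := by
  intro n
  induction n using Nat.strong_induction_on with
  | _ n ih =>
    intro hn
    rcases Nat.even_or_odd n with he | ho
    · -- even case: directly an ET relation
      obtain ⟨k, hk⟩ := he
      refine Ideal.subset_span (Or.inr ⟨k, by omega, ?_⟩)
      rw [show 2*k = n by omega]
    · -- odd case
      rcases eq_or_lt_of_le hn with h1 | h3
      · rw [← h1]; simp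
      · -- n ≥ 2, odd, so n ≥ 3
        set I := Ideal.span (MultRels ∪ ETRels) with hI
        have hMI : Ideal.span MultRels ≤ I := Ideal.span_mono Set.subset_union_left
        have hpow : (-1 : MvPolynomial (List ℕ) ℚ)^n = -1 := ho.neg_one_pow
        set S : MvPolynomial (List ℕ) ℚ :=
          ∑ i ∈ Finset.range (n-1), (-1)^(i+1) * (z (List.replicate (i+1) 1) * z [n-1-i])
          with hS
        have h1 : z [n] - z (List.replicate n 1) + S ∈ I := by
          have := hMI (newton n hn)
          rw [hpow] at this
          convert this using 1
          ring
        set S' : MvPolynomial (List ℕ) ℚ :=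
          ∑ i ∈ Finset.range (n-1), (-1)^(i+1) * (z [i+1] * z [n-1-i]) with hS'
        have h2 : S - S' ∈ I := by
          rw [hS, hS', ← Finset.sum_sub_distrib]
          apply Ideal.sum_mem
          intro i hi
          simp only [Finset.mem_range] at hi
          have hmem : z (List.replicate (i+1) 1) - z [i+1] ∈ I := by
            have := ih (i+1) (by omega) (by omega)
            simpa using I.neg_mem this
          have : (-1 : MvPolynomial (List ℕ) ℚ)^(i+1) * (z (List.replicate (i+1) 1) * z [n-1-i])
              - (-1)^(i+1) * (z [i+1] * z [n-1-i])
              = ((-1)^(i+1) * z [n-1-i]) * (z (List.replicate (i+1) 1) - z [i+1]) := by ring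
          rw [this]
          exact Ideal.mul_mem_left _ _ hmem
        have h3 : S' = 0 := by
          have hm : Even (n-1) := Nat.Odd.sub_odd ho odd_one
          have hrefl := Finset.sum_range_reflect
            (fun i => (-1 : MvPolynomial (List ℕ) ℚ)^(i+1) * (z [i+1] * z [n-1-i])) (n-1)
          have hneg : ∑ i ∈ Finset.range (n-1),
              (fun i => (-1 : MvPolynomial (List ℕ) ℚ)^(i+1) * (z [i+1] * z [n-1-i])) (n-1-1-i)
              = -S' := by
            rw [hS', ← Finset.sum_neg_distrib]
            apply Finset.sum_congr rfl
            intro i hi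
            simp only [Finset.mem_range] at hi
            have e1 : n-1-1-i+1 = n-1-i := by omega
            have e2 : n-1-(n-1-1-i) = i+1 := by omega
            simp only [e1, e2]
            have hpar : (-1 : MvPolynomial (List ℕ) ℚ)^(n-1-i) = -(-1 : MvPolynomial (List ℕ) ℚ)^(i+1) := by
              rcases Nat.even_or_odd i with h | h
              · have o1 : Even (n-1-i) := by
                  rw [Nat.even_iff] at hm h ⊢; omega
                have o2 : Odd (i+1) := Even.add_one h
                rw [o1.neg_one_pow, o2.neg_one_pow]; ring
              · have o1 : Odd (n-1-i) := by
                  rw [Nat.even_iff] at hm; rw [Nat.odd_iff] at h ⊢; omega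
                have o2 : Even (i+1) := h.add_one
                rw [o1.neg_one_pow, o2.neg_one_pow]
            rw [hpar]; ring
          rw [hneg, ← hS'] at hrefl
          rw [← add_self_eq_zero]
          nth_rewrite 1 [← hrefl]
          ring
        rw [h3, sub_zero] at h2
        have := I.sub_mem h1 h2
        simpa using this

/-- modulo the multiplication relations, the relations `T` are equivalent
to the smaller set `ET`; in particular each odd relation `z_{2x+1} = z_{1^{2x+1}}`
already lies in the ideal generated by the multiplication relations and `ET`. -/
theorem T_equiv_ET :
    Ideal.span (MultRels ∪ TRels) = Ideal.span (MultRels ∪ ETRels) ∧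
    ∀ x : ℕ, z [2*x + 1] - z (List.replicate (2*x + 1) 1) ∈ Ideal.span (MultRels ∪ ETRels) := by
  constructor
  · apply le_antisymm
    · rw [Ideal.span_le]
      rintro p (hp | hp)
      · exact Ideal.subset_span (Or.inl hp)
      · obtain ⟨x, hx, rfl⟩ := hp
        exact TinI x hx
    · apply Ideal.span_mono
      apply Set.union_subset_union_right
      rintro p ⟨x, hx, rfl⟩
      exact ⟨2*x, by omega, rfl⟩
  · intro x
    exact TinI (2*x+1) (by omega)
end

section
/- For ribbons α and β, the ribbon Schur Q-functions satisfy the multiplication rule 𝔯_α 𝔯_β = 𝔯_{α·β} + 𝔯_{α⊙β}, where α·β is the concatenation of the compositions and α⊙β is obtained by adding the last part of α to the first part of β. -/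
open MvPolynomial in
/-- The polynomial `q_n` (with `q_0 = 1`) in `ℤ[q₁, q₂, q₃, …]`. -/
noncomputable def QPoly (n : ℕ) : MvPolynomial ℕ ℤ := if n = 0 then 1 else MvPolynomial.X n

/-- The even Euler forms `χ_{2m} = ∑_{r+s=2m} (-1)^r q_r q_s`, `m ≥ 1`. -/
def eulerSet : Set (MvPolynomial ℕ ℤ) :=
  {p | ∃ m : ℕ, 1 ≤ m ∧ p = ∑ r ∈ Finset.range (2*m + 1), (-1) ^ r * QPoly r * QPoly (2*m - r)}

/-- `Ω = ℤ[q₁, q₂, q₃, …]/(even Euler relations)`, the algebra of Schur Q-functions. -/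
abbrev Omega : Type := MvPolynomial ℕ ℤ ⧸ Ideal.span eulerSet

/-- The generators `q_n` of `Ω` (with `q 0 = 1`). -/
noncomputable def q (n : ℕ) : Omega := Ideal.Quotient.mk (Ideal.span eulerSet) (QPoly n)

/-- The list of all coarsenings of a composition (obtained by adding adjacent parts). -/
def coarsenings : List ℕ → List (List ℕ)
  | [] => [[]]
  | [a] => [[a]]
  | a :: b :: t => ((coarsenings (b :: t)).map (a :: ·)) ++ coarsenings ((a + b) :: t)
  termination_by α => α.length

/-- `q_λ(β) = q_{β₁} ⋯ q_{β_m}` (order is irrelevant in the commutative ring `Ω`). -/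
noncomputable def qProd (β : List ℕ) : Omega := (β.map q).prod

/-- The ribbon Schur Q-function `𝔯_α = (-1)^{ℓ(α)} ∑_{β ⪰ α} (-1)^{ℓ(β)} q_{λ(β)}`. -/
noncomputable def ribbonQ (α : List ℕ) : Omega :=
  (-1) ^ α.length * ((coarsenings α).map (fun β => (-1 : Omega) ^ β.length * qProd β)).sum

/-- Auxiliary: the signed sum over coarsenings (ribbonQ without leading sign). -/
noncomputable def Saux (α : List ℕ) : Omega :=
  ((coarsenings α).map (fun β => (-1 : Omega) ^ β.length * qProd β)).sum

lemma ribbonQ_eq_Saux (α : List ℕ) : ribbonQ α = (-1) ^ α.length * Saux α := rfl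

lemma qProd_cons (a : ℕ) (l : List ℕ) : qProd (a :: l) = q a * qProd l := by
  simp [qProd]

lemma Saux_singleton (a : ℕ) : Saux [a] = - q a := by
  simp [Saux, coarsenings, qProd]
  ring

lemma Saux_cons (a b : ℕ) (t : List ℕ) :
    Saux (a :: b :: t) = (- q a) * Saux (b :: t) + Saux ((a + b) :: t) := by
  rw [Saux, coarsenings, List.map_append, List.sum_append, List.map_map]
  have h : ((fun β => (-1 : Omega) ^ β.length * qProd β) ∘ (a :: ·)) =
      fun γ => (- q a) * ((-1 : Omega) ^ γ.length * qProd γ) := by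
    funext γ
    simp only [Function.comp, List.length_cons, qProd_cons, pow_succ]
    ring
  rw [h, List.sum_map_mul_left]
  rfl

lemma compNcat_single (a b : ℕ) (bs : List ℕ) :
    compNcat [a] (b :: bs) = (a + b) :: bs := rfl

lemma compNcat_cons (a : ℕ) (as β : List ℕ) (has : as ≠ []) (hβ : β ≠ []) :
    compNcat (a :: as) β = a :: compNcat as β := by
  obtain ⟨b, bs, rfl⟩ := List.exists_cons_of_ne_nil hβ
  obtain ⟨x, xs, hx⟩ := List.exists_cons_of_ne_nil (l := as.reverse)
    (by simpa using has)
  have h1 : (a :: as).reverse = x :: (xs ++ [a]) := by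
    rw [List.reverse_cons, hx]; rfl
  have h2 : as = xs.reverse ++ [x] := by
    have := congrArg List.reverse hx
    simpa using this
  simp [compNcat, h1, hx, h2]

lemma compNcat_length : ∀ (α β : List ℕ), α ≠ [] → β ≠ [] →
    (compNcat α β).length + 1 = α.length + β.length := by
  intro α
  induction α with
  | nil => intro β h; exact absurd rfl h
  | cons a as ih =>
    intro β _ hβ
    cases has : as with
    | nil =>
      obtain ⟨b, bs, rfl⟩ := List.exists_cons_of_ne_nil hβ
      simp [compNcat_single]
      omega
    | cons c t =>
      rw [← has, compNcat_cons a as β (by simp [has]) hβ]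
      have := ih β (by simp [has]) hβ
      simp only [List.length_cons]
      omega

lemma Saux_key : ∀ (α β : List ℕ), α ≠ [] → β ≠ [] →
    Saux (α ++ β) = Saux α * Saux β + Saux (compNcat α β) := by
  intro α
  induction α using coarsenings.induct with
  | case1 => intro β h; exact absurd rfl h
  | case2 a =>
    intro β _ hβ
    obtain ⟨b, bs, rfl⟩ := List.exists_cons_of_ne_nil hβ
    rw [List.singleton_append, Saux_cons, compNcat_single, Saux_singleton]
  | case3 a c t ih1 ih2 =>
    intro β _ hβ
    have h1 := ih1 β (by simp) hβ
    have h2 := ih2 β (by simp) hβ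
    have hL : ((a :: c :: t) ++ β) = a :: c :: (t ++ β) := rfl
    have hcn : Saux (compNcat (a :: c :: t) β) =
        (- q a) * Saux (compNcat (c :: t) β) + Saux (compNcat ((a + c) :: t) β) := by
      rw [compNcat_cons a (c :: t) β (by simp) hβ]
      cases t with
      | nil =>
        obtain ⟨b, bs, rfl⟩ := List.exists_cons_of_ne_nil hβ
        rw [compNcat_single, compNcat_single, Saux_cons]
        ring_nf
      | cons u us =>
        rw [compNcat_cons c (u :: us) β (by simp) hβ,
            compNcat_cons (a + c) (u :: us) β (by simp) hβ, Saux_cons]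
    rw [hL, Saux_cons, Saux_cons a c t,
        show (c :: t) ++ β = c :: (t ++ β) from rfl] at *
    rw [show ((a + c) :: t) ++ β = (a + c) :: (t ++ β) from rfl] at h2
    rw [h1, h2, hcn]
    ring

/-- the multiplication rule `𝔯_α 𝔯_β = 𝔯_{α·β} + 𝔯_{α⊙β}`. -/
theorem ribbonQ_mul (α β : List ℕ) (hα : IsComposition α) (hβ : IsComposition β) :
    ribbonQ α * ribbonQ β = ribbonQ (α ++ β) + ribbonQ (compNcat α β) := by
  obtain ⟨hα1, -⟩ := hα
  obtain ⟨hβ1, -⟩ := hβ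
  have hlen := compNcat_length α β hα1 hβ1
  have hS := Saux_key α β hα1 hβ1
  rw [ribbonQ_eq_Saux, ribbonQ_eq_Saux, ribbonQ_eq_Saux, ribbonQ_eq_Saux,
      List.length_append, hS, pow_add]
  have hsign : ((-1 : Omega)) ^ α.length * (-1) ^ β.length =
      - (-1 : Omega) ^ (compNcat α β).length := by
    rw [← pow_add, ← hlen, pow_succ]; ring
  linear_combination (-(Saux (compNcat α β))) * hsign
end
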